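/- arXiv:2504.06745 — 2 statements merged into one kernel-verified Lean document; each statement's English description precedes it below -/
import Mathlib

section
/- Let K ⊆ ℂⁿ be a compact set and w = (w₁,…,w_s) : K → (0,∞)ˢ a continuous weight. For every r ∈ ℕ one has δ^{w,r}(K,U) ≥ (∏_{l=1}^{s} δ^{w_l,r}(K))^{1/s}. -/
open MeasureTheory Filter Topology
open scoped BigOperators ComplexConjugate ENNReal NNReal

noncomputable section

/-- Points of ℂⁿ. -/
abbrev Pt (n : ℕ) := Fin n → ℂ

/-- The Hermitian space U ≅ ℂˢ with its standard Hermitian inner product. -/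
abbrev Vec (s : ℕ) := EuclideanSpace ℂ (Fin s)

/-- The monomial x^β. -/
def mono {n : ℕ} (β : Fin n → ℕ) (x : Pt n) : ℂ := ∏ i, x i ^ β i

/-- m_r := C(n+r, n), the dimension of the space of polynomials of degree ≤ r in n variables. -/
def mr (n r : ℕ) : ℕ := (n + r).choose n

/-- ℓ_r := Σ_{k=1}^{r} k (m_k − m_{k−1}). -/
def lr (n r : ℕ) : ℕ := ∑ k ∈ Finset.Icc 1 r, k * (mr n k - mr n (k - 1))

/-- `B` enumerates the multi-indices β ∈ ℕⁿ with |β| ≤ r. -/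
def IsEnum {n : ℕ} (r m : ℕ) (B : Fin m → Fin n → ℕ) : Prop :=
  Function.Injective B ∧ (∀ l, ∑ j, B l j ≤ r) ∧
    ∀ γ : Fin n → ℕ, (∑ j, γ j) ≤ r → ∃ l, B l = γ

/-- The basis polynomial q_{(l,i)}(x) := x^{β(l)} e_i of 𝒫_r(U). -/
def qb {n s m : ℕ} (B : Fin m → Fin n → ℕ) (j : Fin m × Fin s) (x : Pt n) : Vec s :=
  EuclideanSpace.single j.2 (mono (B j.1) x)

/-- f ⊙ w^r : componentwise multiplication by the r-th power of the weight w. -/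
def wodot {n s : ℕ} (w : Pt n → Fin s → ℝ) (r : ℕ) (f : Pt n → Vec s) : Pt n → Vec s :=
  fun x => WithLp.toLp 2 fun i => ((w x i : ℂ) ^ r) * f x i

/-- f ⊙ ω : componentwise multiplication by a real vector function ω. -/
def modot {n s : ℕ} (ω : Pt n → Fin s → ℝ) (f : Pt n → Vec s) : Pt n → Vec s :=
  fun x => WithLp.toLp 2 fun i => ((ω x i : ℂ)) * f x i

/-- The ℂˢ-valued polynomial of degree ≤ r with coefficients c (in the basis qb). -/
def poly {n s m : ℕ} (B : Fin m → Fin n → ℕ) (c : Fin m × Fin s → ℂ) (x : Pt n) : Vec s :=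
  WithLp.toLp 2 fun i => ∑ l, c (l, i) * mono (B l) x

/-- A scalar polynomial of degree ≤ r with coefficients c. -/
def spoly {n m : ℕ} (B : Fin m → Fin n → ℕ) (c : Fin m → ℂ) (x : Pt n) : ℂ :=
  ∑ l, c l * mono (B l) x

/-- The rank-one semimetric g_x(a,b) := conj(⟨v(x),a⟩)·⟨v(x),b⟩. -/
def gval {n s : ℕ} (v : Pt n → Vec s) (x : Pt n) (a b : Vec s) : ℂ :=
  conj (inner ℂ (v x) a : ℂ) * (inner ℂ (v x) b : ℂ)

lemma mono_continuous {n : ℕ} (β : Fin n → ℕ) : Continuous (mono β) := by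
  unfold mono
  exact continuous_finset_prod _ (fun i _ => (continuous_apply i).pow _)

/-- q_j ⊙ w^r as a continuous map on K, an element of the Banach space C(K, ℂˢ). -/
def qwCont {n s m : ℕ} (K : Set (Pt n)) (w : Pt n → Fin s → ℝ)
    (hw : ContinuousOn (fun x => w x) K) (B : Fin m → Fin n → ℕ) (r : ℕ)
    (j : Fin m × Fin s) : C(↥K, Vec s) :=
  ⟨fun x => wodot w r (qb B j) x.1, by
    unfold wodot qb
    refine (PiLp.continuous_toLp 2 _).comp (continuous_pi fun i => ?_)
    have hwc : Continuous fun x : ↥K => w x.1 i := by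
      have := hw.comp_continuous continuous_subtype_val (fun x : ↥K => x.2)
      exact (continuous_apply i).comp this
    have h1 : Continuous fun x : ↥K => ((w x.1 i : ℂ)) :=
      Complex.continuous_ofReal.comp hwc
    have h2 : Continuous fun x : ↥K =>
        (EuclideanSpace.single j.2 (mono (B j.1) x.1) : Vec s) i := by
      simp only [EuclideanSpace.single_apply]
      by_cases h : i = j.2
      · simp only [h, if_true]
        exact (mono_continuous (B j.1)).comp continuous_subtype_val
      · simp only [h, if_false]
        exact continuous_const
    exact (h1.pow r).mul h2⟩

/-- The quantity maximized in the definition of the scalar δ^{w_l,r}(K) :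
the supremum over tuples of points of K of |Vandermonde| · ∏ w_l^r. -/
def deltaSBase {n : ℕ} (K : Set (Pt n)) (wl : Pt n → ℝ) (r : ℕ)
    (B : Fin (mr n r) → Fin n → ℕ) : ℝ :=
  sSup {t : ℝ | ∃ x : Fin (mr n r) → Pt n, (∀ i, x i ∈ K) ∧
    t = ‖(Matrix.det (Matrix.of fun i j => mono (B j) (x i)))‖ * ∏ i, wl (x i) ^ r}

/-- The scalar r-th weighted transfinite diameter δ^{w_l,r}(K). -/
def deltaS {n : ℕ} (K : Set (Pt n)) (wl : Pt n → ℝ) (r : ℕ)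
    (B : Fin (mr n r) → Fin n → ℕ) : ℝ :=
  (deltaSBase K wl r B) ^ (((lr n r : ℕ) : ℝ)⁻¹)

/-- The quantity maximized in the definition of δ^{w,r}(K,U) : the supremum of
|det[T_i (q_j ⊙ w^r)]| over N-tuples of continuous linear functionals on C(K,ℂˢ)
of operator norm at most 1. -/
def deltaVBase {n : ℕ} (s : ℕ) (K : Set (Pt n)) [CompactSpace ↥K]
    (w : Pt n → Fin s → ℝ) (hw : ContinuousOn (fun x => w x) K)
    (r : ℕ) (B : Fin (mr n r) → Fin n → ℕ) : ℝ :=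
  sSup {t : ℝ | ∃ T : (Fin (mr n r) × Fin s) → (C(↥K, Vec s) →L[ℂ] ℂ),
    (∀ i, ‖T i‖ ≤ 1) ∧
    t = ‖(Matrix.det (Matrix.of fun i j => T i (qwCont K w hw B r j)))‖}

/-- The r-th weighted transfinite diameter δ^{w,r}(K,U). -/
def deltaV {n : ℕ} (s : ℕ) (K : Set (Pt n)) [CompactSpace ↥K]
    (w : Pt n → Fin s → ℝ) (hw : ContinuousOn (fun x => w x) K)
    (r : ℕ) (B : Fin (mr n r) → Fin n → ℕ) : ℝ :=
  (deltaVBase s K w hw r B) ^ (((s * lr n r : ℕ) : ℝ)⁻¹)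

/-!
For each `l`, compactness gives `m_r` points `x_{l,1}, …, x_{l,m_r}` of `K` at which the `l`-th
weighted Vandermonde `|det[x_a^{β(b)}]| · ∏_a w_l(x_a)^r` attains `δ^{w_l,r}(K)^{ℓ_r}`. The
functionals `f ↦ f(x_{l,a})_l` have norm at most `1`, and on the basis `q_{(b,l')} ⊙ w^r` they
give a block-diagonal matrix whose `l`-th block is that weighted Vandermonde matrix. Its
determinant is the product of the scalar maxima, which is therefore at most
`δ^{w,r}(K,U)^{s ℓ_r}`.
-/

open Matrix

section Functionals

variable {X : Type*} [TopologicalSpace X] {s : ℕ}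

def evalCoord (x : X) (i : Fin s) : C(X, Vec s) →L[ℂ] ℂ :=
  (EuclideanSpace.proj i).comp (ContinuousMap.evalCLM ℂ x)

@[simp]
lemma evalCoord_apply (x : X) (i : Fin s) (f : C(X, Vec s)) : evalCoord x i f = f x i := rfl

lemma norm_evalCoord_le [CompactSpace X] (x : X) (i : Fin s) : ‖evalCoord x i‖ ≤ 1 :=
  ContinuousLinearMap.opNorm_le_bound _ zero_le_one fun f =>
    (one_mul ‖f‖).symm ▸ (PiLp.norm_apply_le (f x) i).trans (f.norm_coe_le_norm x)

end Functionals

lemma bddAbove_norm_det_of_norm_le_one {𝕜 E ι : Type*} [NontriviallyNormedField 𝕜]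
    [NormedAddCommGroup E] [NormedSpace 𝕜 E] [Fintype ι] [DecidableEq ι] (f : ι → E) :
    BddAbove {t : ℝ | ∃ T : ι → E →L[𝕜] 𝕜, (∀ i, ‖T i‖ ≤ 1) ∧
      t = ‖(Matrix.of fun i j => T i (f j)).det‖} := by
  refine ⟨(Fintype.card ι).factorial • (∑ j, ‖f j‖) ^ Fintype.card ι, ?_⟩
  rintro t ⟨T, hT, rfl⟩
  refine det_le (abv := NormedField.toAbsoluteValue 𝕜) fun i j => ?_
  calc ‖T i (f j)‖ ≤ ‖T i‖ * ‖f j‖ := (T i).le_opNorm _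
    _ ≤ 1 * ∑ j, ‖f j‖ := mul_le_mul (hT i)
        (Finset.single_le_sum (fun j _ => norm_nonneg _) (Finset.mem_univ j))
        (norm_nonneg _) zero_le_one
    _ = ∑ j, ‖f j‖ := one_mul _

lemma rpow_prod_rpow_le {ι : Type*} (S : Finset ι) {a : ι → ℝ} {V p q : ℝ}
    (ha : ∀ i ∈ S, 0 ≤ a i) (hp : 0 ≤ p) (hq : 0 ≤ q) (h : ∏ i ∈ S, a i ≤ V) :
    (∏ i ∈ S, a i ^ p) ^ q ≤ V ^ (p * q) := by
  rw [Real.finsetProd_rpow S a ha, ← Real.rpow_mul (Finset.prod_nonneg ha)]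
  exact Real.rpow_le_rpow (Finset.prod_nonneg ha) h (mul_nonneg hp hq)

variable {n s : ℕ} {K : Set (Pt n)} {r : ℕ} {B : Fin (mr n r) → Fin n → ℕ}

lemma mr_pos (n r : ℕ) : 0 < mr n r := Nat.choose_pos (Nat.le_add_right n r)

lemma deltaSBase_nonneg {wl : Pt n → ℝ} (hwl : ∀ x ∈ K, 0 ≤ wl x) :
    0 ≤ deltaSBase K wl r B :=
  Real.sSup_nonneg <| by
    rintro t ⟨x, hx, rfl⟩
    exact mul_nonneg (norm_nonneg _) (Finset.prod_nonneg fun i _ => pow_nonneg (hwl _ (hx i)) r)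

lemma deltaSBase_empty (wl : Pt n → ℝ) : deltaSBase (∅ : Set (Pt n)) wl r B = 0 := by
  rw [deltaSBase, ← Real.sSup_empty]
  congr
  refine Set.eq_empty_of_forall_notMem ?_
  rintro t ⟨x, hx, -⟩
  exact hx ⟨0, mr_pos n r⟩

lemma exists_eq_deltaSBase (hK : IsCompact K) (hne : K.Nonempty) {wl : Pt n → ℝ}
    (hwl : ContinuousOn wl K) : ∃ x : Fin (mr n r) → Pt n, (∀ i, x i ∈ K) ∧
      deltaSBase K wl r B =
        ‖(Matrix.of fun i j => mono (B j) (x i)).det‖ * ∏ i, wl (x i) ^ r := by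
  set F : (Fin (mr n r) → Pt n) → ℝ := fun x =>
    ‖(Matrix.of fun i j => mono (B j) (x i)).det‖ * ∏ i, wl (x i) ^ r
  set P : Set (Fin (mr n r) → Pt n) := Set.univ.pi fun _ => K
  have hP : IsCompact P := isCompact_univ_pi fun _ => hK
  have hF : ContinuousOn F P := by
    refine ContinuousOn.mul (Continuous.continuousOn ?_) (continuousOn_finsetProd _ fun i _ => ?_)
    · exact continuous_norm.comp <| Continuous.matrix_det <| continuous_matrix fun i j =>
        (mono_continuous (B j)).comp (continuous_apply i)
    · exact (hwl.comp (continuous_apply i).continuousOn fun x (hx : x ∈ P) => hx i trivial).pow r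
  have hset : {t : ℝ | ∃ x : Fin (mr n r) → Pt n, (∀ i, x i ∈ K) ∧ t = F x} =
      F '' P := by
    ext t
    simp [P, eq_comm]
  obtain ⟨x, hx, hFx⟩ := (hP.image_of_continuousOn hF).sSup_mem
    ((Set.univ_pi_nonempty_iff.mpr fun _ => hne).image F)
  exact ⟨x, fun i => hx i trivial, by rw [deltaSBase, hset, ← hFx]⟩

lemma qwCont_apply {w : Pt n → Fin s → ℝ} (hw : ContinuousOn (fun x => w x) K)
    (j : Fin (mr n r) × Fin s) (x : K) (i : Fin s) :
    qwCont K w hw B r j x i = if i = j.2 then (w x i : ℂ) ^ r * mono (B j.1) x else 0 := by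
  split_ifs with h <;> simp [qwCont, wodot, qb, PiLp.single_apply, h]

lemma det_evalCoord_qwCont {w : Pt n → Fin s → ℝ} (hw : ContinuousOn (fun x => w x) K)
    (X : Fin s → Fin (mr n r) → K) :
    (Matrix.of fun (i : Fin (mr n r) × Fin s) j =>
        evalCoord (X i.2 i.1) i.2 (qwCont K w hw B r j)).det =
      ∏ l, (∏ a, (w (X l a) l : ℂ) ^ r) * (Matrix.of fun a b => mono (B b) (X l a)).det := by
  have hblock : (Matrix.of fun (i : Fin (mr n r) × Fin s) j =>
      evalCoord (X i.2 i.1) i.2 (qwCont K w hw B r j)) =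
      blockDiagonal fun l => Matrix.of fun a b => (w (X l a) l : ℂ) ^ r * mono (B b) (X l a) := by
    ext ⟨a, l⟩ ⟨b, l'⟩
    simp [qwCont_apply, blockDiagonal_apply]
  rw [hblock, det_blockDiagonal]
  exact Finset.prod_congr rfl fun l _ => det_mul_column _ _

lemma norm_det_le_deltaVBase [CompactSpace K] {w : Pt n → Fin s → ℝ}
    (hw : ContinuousOn (fun x => w x) K) (T : Fin (mr n r) × Fin s → C(K, Vec s) →L[ℂ] ℂ)
    (hT : ∀ i, ‖T i‖ ≤ 1) :
    ‖(Matrix.of fun i j => T i (qwCont K w hw B r j)).det‖ ≤ deltaVBase s K w hw r B :=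
  le_csSup (bddAbove_norm_det_of_norm_le_one _) ⟨T, hT, rfl⟩

lemma deltaVBase_nonneg [CompactSpace K] {w : Pt n → Fin s → ℝ}
    (hw : ContinuousOn (fun x => w x) K) : 0 ≤ deltaVBase s K w hw r B :=
  Real.sSup_nonneg <| by
    rintro t ⟨T, -, rfl⟩
    exact norm_nonneg _

lemma prod_deltaSBase_le_deltaVBase (hs : 0 < s) [CompactSpace K] {w : Pt n → Fin s → ℝ}
    (hw : ContinuousOn (fun x => w x) K) (hwnn : ∀ x ∈ K, ∀ i, 0 ≤ w x i) :
    ∏ l, deltaSBase K (fun x => w x l) r B ≤ deltaVBase s K w hw r B := by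
  rcases K.eq_empty_or_nonempty with rfl | hne
  · rw [Finset.prod_eq_zero (Finset.mem_univ (⟨0, hs⟩ : Fin s)) (deltaSBase_empty _)]
    exact deltaVBase_nonneg hw
  have hK : IsCompact K := isCompact_iff_compactSpace.mpr ‹_›
  choose x hxK hx using fun l =>
    exists_eq_deltaSBase (B := B) (wl := fun x => w x l) hK hne
      ((continuous_apply l).comp_continuousOn hw)
  set X : Fin s → Fin (mr n r) → K := fun l a => ⟨x l a, hxK l a⟩
  calc ∏ l, deltaSBase K (fun x => w x l) r B
      = ‖(Matrix.of fun (i : Fin (mr n r) × Fin s) j =>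
          evalCoord (X i.2 i.1) i.2 (qwCont K w hw B r j)).det‖ := by
        rw [det_evalCoord_qwCont, norm_prod]
        refine Finset.prod_congr rfl fun l _ => ?_
        rw [hx, norm_mul, norm_prod, mul_comm]
        congr 1
        refine Finset.prod_congr rfl fun a _ => ?_
        rw [norm_pow, Complex.norm_real, Real.norm_of_nonneg (hwnn _ (hxK l a) l)]
    _ ≤ deltaVBase s K w hw r B :=
        norm_det_le_deltaVBase hw _ fun _ => norm_evalCoord_le _ _

theorem stmt2_general {n s : ℕ} (hs : 0 < s)
    (K : Set (Pt n)) [CompactSpace ↥K]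
    (w : Pt n → Fin s → ℝ) (hw : ContinuousOn (fun x => w x) K)
    (hwpos : ∀ x ∈ K, ∀ i, 0 < w x i)
    (r : ℕ) (B : Fin (mr n r) → Fin n → ℕ) :
    (∏ l : Fin s, deltaS K (fun x => w x l) r B) ^ ((s : ℝ)⁻¹) ≤ deltaV s K w hw r B := by
  have hwnn : ∀ x ∈ K, ∀ i, 0 ≤ w x i := fun x hx i => (hwpos x hx i).le
  have hexp : (((s * lr n r : ℕ) : ℝ))⁻¹ = ((lr n r : ℕ) : ℝ)⁻¹ * (s : ℝ)⁻¹ := by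
    push_cast
    rw [mul_inv, mul_comm]
  unfold deltaS deltaV
  rw [hexp]
  exact rpow_prod_rpow_le _ (fun l _ => deltaSBase_nonneg fun x hx => hwnn x hx l)
    (by positivity) (by positivity) (prod_deltaSBase_le_deltaVBase hs hw hwnn)

/-- δ^{w,r}(K,U) ≥ (∏_l δ^{w_l,r}(K))^{1/s}. -/
theorem stmt2 {n s : ℕ} (hn : 0 < n) (hs : 0 < s)
    (K : Set (Pt n)) [CompactSpace ↥K] (hK : IsCompact K)
    (w : Pt n → Fin s → ℝ) (hw : ContinuousOn (fun x => w x) K)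
    (hwpos : ∀ x ∈ K, ∀ i, 0 < w x i)
    (r : ℕ) (B : Fin (mr n r) → Fin n → ℕ) (hB : IsEnum r (mr n r) B) :
    (∏ l : Fin s, deltaS K (fun x => w x l) r B) ^ ((s : ℝ)⁻¹) ≤ deltaV s K w hw r B :=
  stmt2_general hs K w hw hwpos r B
end
end

section
/- Let (f_r)_{r∈ℕ} be a sequence of concave functions f_r : ℝ → ℝ, each differentiable at 0, and let φ : ℝ → ℝ be differentiable at 0. If lim_{r→∞} f_r(0) = φ(0) and liminf_{r→∞} f_r(t) ≥ φ(t) for every t ∈ ℝ, then lim_{r→∞} f_r'(0) = φ'(0). -/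
open MeasureTheory Filter Topology
open scoped BigOperators ComplexConjugate ENNReal NNReal

noncomputable section


/-- if concave differentiable f_r satisfy f_r(0) → φ(0) and
liminf f_r(t) ≥ φ(t) for all t, then f_r'(0) → φ'(0). -/
theorem stmt16 (f : ℕ → ℝ → ℝ) (φ : ℝ → ℝ) (f' : ℕ → ℝ) (φ' : ℝ)
    (hconc : ∀ r : ℕ, ConcaveOn ℝ Set.univ (f r))
    (hdiff : ∀ r : ℕ, HasDerivAt (f r) (f' r) 0)
    (hφ : HasDerivAt φ φ' 0)
    (h0 : Tendsto (fun r : ℕ => f r 0) atTop (𝓝 (φ 0)))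
    (hlb : ∀ t : ℝ, ∀ ε > (0 : ℝ), ∀ᶠ r : ℕ in atTop, φ t - ε ≤ f r t) :
    Tendsto f' atTop (𝓝 φ') := by
  have hφs : Tendsto (slope φ 0) (𝓝[≠] (0:ℝ)) (𝓝 φ') := hasDerivAt_iff_tendsto_slope.mp hφ
  rw [tendsto_order]
  constructor
  · -- lower bound: use a point t > 0
    intro a ha
    obtain ⟨m, ham, hmφ⟩ := exists_between ha
    have h1 : ∀ᶠ t in 𝓝[>] (0:ℝ), m < slope φ 0 t ∧ t ∈ Set.Ioi (0:ℝ) :=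
      ((hφs.mono_left (nhdsWithin_mono 0 (fun x hx => ne_of_gt hx))).eventually
        (eventually_gt_nhds hmφ)).and eventually_mem_nhdsWithin
    obtain ⟨t, htm, ht0⟩ := h1.exists
    rw [Set.mem_Ioi] at ht0
    rw [slope_def_field] at htm
    set ε : ℝ := t * (m - a) / 2 with hε
    have hεpos : 0 < ε := by
      have : 0 < m - a := by linarith
      positivity
    have hev1 := hlb t ε hεpos
    have hev2 : ∀ᶠ r in atTop, f r 0 < φ 0 + ε :=
      h0.eventually (eventually_lt_nhds (by linarith))
    filter_upwards [hev1, hev2] with r h1r h2r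
    have hkey : slope (f r) 0 t ≤ f' r :=
      (hconc r).slope_le_of_hasDerivAt (Set.mem_univ _) (Set.mem_univ _) ht0 (hdiff r)
    rw [slope_def_field] at hkey
    have hslope : a < (f r t - f r 0) / (t - 0) := by
      rw [sub_zero, lt_div_iff₀ ht0]
      have hm : m * (t - 0) < φ t - φ 0 := (lt_div_iff₀ (by linarith)).mp htm
      rw [sub_zero] at hm
      nlinarith
    linarith
  · -- upper bound: use a point s < 0
    intro a ha
    obtain ⟨m, hφm, hma⟩ := exists_between ha
    have h1 : ∀ᶠ s in 𝓝[<] (0:ℝ), slope φ 0 s < m ∧ s ∈ Set.Iio (0:ℝ) :=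
      ((hφs.mono_left (nhdsWithin_mono 0 (fun x hx => ne_of_lt hx))).eventually
        (eventually_lt_nhds hφm)).and eventually_mem_nhdsWithin
    obtain ⟨s, hsm, hs0⟩ := h1.exists
    rw [Set.mem_Iio] at hs0
    rw [slope_comm, slope_def_field] at hsm
    set ε : ℝ := (-s) * (a - m) / 2 with hε
    have hεpos : 0 < ε := by
      have h1 : 0 < -s := by linarith
      have h2 : 0 < a - m := by linarith
      positivity
    have hev1 := hlb s ε hεpos
    have hev2 : ∀ᶠ r in atTop, f r 0 < φ 0 + ε :=
      h0.eventually (eventually_lt_nhds (by linarith))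
    filter_upwards [hev1, hev2] with r h1r h2r
    have hkey : f' r ≤ slope (f r) s 0 :=
      (hconc r).le_slope_of_hasDerivAt (Set.mem_univ _) (Set.mem_univ _) hs0 (hdiff r)
    rw [slope_def_field] at hkey
    have hslope : (f r 0 - f r s) / (0 - s) < a := by
      rw [zero_sub, div_lt_iff₀ (by linarith : (0:ℝ) < -s)]
      have hm : φ 0 - φ s < m * (0 - s) := (div_lt_iff₀ (by linarith : (0:ℝ) < 0 - s)).mp hsm
      rw [zero_sub] at hm
      nlinarith
    linarith
end
end
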